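/- In extreme Reissner–Nordström, the commutator of the wave operator with ∂_r in (v, r) coordinates is [□_g, ∂_r]ψ = −D' ∂_r∂_r ψ + (2/r²) ∂_v ψ − R' ∂_r ψ + (2/r) Δψ, where D(r) = (1−M/r)², R(r) = D'(r) + 2D(r)/r, R' = dR/dr, and Δ is the Laplacian on the sphere of radius r. In particular, since D'(M) = 0, the top-order term −D' ∂_r² ψ vanishes on the horizon r = M. -/

import Mathlib

/-- Partial derivative in the second (radial) variable. -/
noncomputable def prd (f : ℝ → ℝ → ℝ) : ℝ → ℝ → ℝ := fun v r => deriv (fun r' => f v r') r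

/-- Partial derivative in the first (advanced time) variable. -/
noncomputable def pvd (f : ℝ → ℝ → ℝ) : ℝ → ℝ → ℝ := fun v r => deriv (fun v' => f v' r) v

/-!
Differentiate the expression for `□_g ψ` in `r` by the product rule and subtract `□_g (∂_r ψ)`.
Once the mixed partials `∂_v ∂_r` and `∂_r ∂_v` are identified (which needs `ψ ∈ C³`), the terms
`D ∂_r³ψ`, `2 ∂_v ∂_r² ψ`, `(2/r) ∂_v ∂_r ψ` and `R ∂_r² ψ` cancel, leaving exactly the derivatives
falling on the coefficients `D`, `2/r`, `R`, plus the sphere term `Δ ∂_r ψ - ∂_r Δ ψ = (2/r) Δψ`.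
Finally `D' = 2 (1 - M/r) M / r²` vanishes at `r = M`.
-/

open Function

section PartialDerivatives

variable {f : ℝ → ℝ → ℝ} {v r : ℝ}

theorem hasDerivAt_prd (hf : DifferentiableAt ℝ (uncurry f) (v, r)) :
    HasDerivAt (f v) (prd f v r) r :=
  (hf.comp r ((differentiableAt_const v).prodMk differentiableAt_id)).hasDerivAt

theorem prd_eq_fderiv (hf : DifferentiableAt ℝ (uncurry f) (v, r)) :
    prd f v r = fderiv ℝ (uncurry f) (v, r) (0, 1) := by
  have hpath : HasDerivAt (fun r' : ℝ => (v, r')) ((0 : ℝ), (1 : ℝ)) r :=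
    (hasDerivAt_const r v).prodMk (hasDerivAt_id r)
  exact (hf.hasFDerivAt.comp_hasDerivAt r hpath).deriv

theorem pvd_eq_fderiv (hf : DifferentiableAt ℝ (uncurry f) (v, r)) :
    pvd f v r = fderiv ℝ (uncurry f) (v, r) (1, 0) := by
  have hpath : HasDerivAt (fun v' : ℝ => (v', r)) ((1 : ℝ), (0 : ℝ)) v :=
    (hasDerivAt_id v).prodMk (hasDerivAt_const v r)
  exact (hf.hasFDerivAt.comp_hasDerivAt v hpath).deriv

theorem uncurry_prd (hf : Differentiable ℝ (uncurry f)) :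
    uncurry (prd f) = fun p => fderiv ℝ (uncurry f) p (0, 1) := by
  ext ⟨v, r⟩
  exact prd_eq_fderiv (hf (v, r))

theorem uncurry_pvd (hf : Differentiable ℝ (uncurry f)) :
    uncurry (pvd f) = fun p => fderiv ℝ (uncurry f) p (1, 0) := by
  ext ⟨v, r⟩
  exact pvd_eq_fderiv (hf (v, r))

theorem contDiff_uncurry_prd {n : WithTop ℕ∞} (hf : ContDiff ℝ (n + 1) (uncurry f)) :
    ContDiff ℝ n (uncurry (prd f)) := by
  rw [uncurry_prd (hf.differentiable (by simp))]
  exact (hf.fderiv_right le_rfl).clm_apply contDiff_const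

theorem contDiff_uncurry_pvd {n : WithTop ℕ∞} (hf : ContDiff ℝ (n + 1) (uncurry f)) :
    ContDiff ℝ n (uncurry (pvd f)) := by
  rw [uncurry_pvd (hf.differentiable (by simp))]
  exact (hf.fderiv_right le_rfl).clm_apply contDiff_const

theorem pvd_prd_eq_prd_pvd (hf : ContDiff ℝ 2 (uncurry f)) (v r : ℝ) :
    pvd (prd f) v r = prd (pvd f) v r := by
  have hd : Differentiable ℝ (fderiv ℝ (uncurry f)) :=
    (hf.fderiv_right (m := 1) (by norm_num)).differentiable one_ne_zero
  have hsecond : ∀ w u : ℝ × ℝ,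
      fderiv ℝ (fun p => fderiv ℝ (uncurry f) p w) (v, r) u
        = fderiv ℝ (fderiv ℝ (uncurry f)) (v, r) u w := fun w u => by
    rw [fderiv_clm_apply (hd _) (differentiableAt_const w)]
    simp
  have hprd : ContDiff ℝ 1 (uncurry (prd f)) := contDiff_uncurry_prd hf
  have hpvd : ContDiff ℝ 1 (uncurry (pvd f)) := contDiff_uncurry_pvd hf
  rw [pvd_eq_fderiv (hprd.differentiable one_ne_zero (v, r)),
    prd_eq_fderiv (hpvd.differentiable one_ne_zero (v, r)),
    uncurry_prd (hf.differentiable (by simp)), uncurry_pvd (hf.differentiable (by simp)),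
    hsecond, hsecond]
  exact (hf.contDiffAt.isSymmSndFDerivAt (by simp)).eq _ _

end PartialDerivatives

theorem hasDerivAt_one_sub_div_sq (M : ℝ) {r : ℝ} (hr : r ≠ 0) :
    HasDerivAt (fun x => (1 - M / x) ^ 2) (2 * (1 - M / r) * (M / r ^ 2)) r := by
  have h := (((hasDerivAt_inv hr).const_mul M).const_sub 1).fun_pow 2
  simp only [div_eq_mul_inv] at h ⊢
  exact h.congr_deriv (by push_cast; ring)

theorem deriv_one_sub_div_sq_self {M : ℝ} (hM : M ≠ 0) :
    deriv (fun x => (1 - M / x) ^ 2) M = 0 := by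
  simp [(hasDerivAt_one_sub_div_sq M hM).deriv, hM]

theorem differentiableAt_deriv_one_sub_div_sq (M : ℝ) {r : ℝ} (hr : r ≠ 0) :
    DifferentiableAt ℝ (deriv fun x => (1 - M / x) ^ 2) r := by
  have heq : (fun x => 2 * (1 - M / x) * (M / x ^ 2)) =ᶠ[nhds r]
      deriv fun x => (1 - M / x) ^ 2 := by
    filter_upwards [isOpen_ne.mem_nhds hr] with x hx
    exact (hasDerivAt_one_sub_div_sq M hx).deriv.symm
  refine DifferentiableAt.congr_of_eventuallyEq ?_ heq.symm
  fun_prop (disch := simp [hr])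

section WaveOperator

variable {D R : ℝ → ℝ} {Lf Ldrf f : ℝ → ℝ → ℝ} {v r : ℝ}

/-- `□_g f` for `g = -D dv² + 2 dv dr + r² dΩ²`, with `R = D' + 2D/r` and `Lf` standing for the
spherical Laplacian of `f`. -/
noncomputable def waveOp (D R : ℝ → ℝ) (Lf f : ℝ → ℝ → ℝ) : ℝ → ℝ → ℝ := fun v r =>
  D r * prd (prd f) v r + 2 * pvd (prd f) v r + (2 / r) * pvd f v r + R r * prd f v r + Lf v r

theorem prd_waveOp (hD : DifferentiableAt ℝ D r) (hR : DifferentiableAt ℝ R r) (hr : r ≠ 0)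
    (hf : ContDiff ℝ 3 (uncurry f)) (hLf : DifferentiableAt ℝ (uncurry Lf) (v, r)) :
    prd (waveOp D R Lf f) v r = deriv D r * prd (prd f) v r + D r * prd (prd (prd f)) v r
      + 2 * pvd (prd (prd f)) v r + (-(2 / r ^ 2) * pvd f v r + 2 / r * pvd (prd f) v r)
      + (deriv R r * prd f v r + R r * prd (prd f) v r) + prd Lf v r := by
  have hfr : ContDiff ℝ 2 (uncurry (prd f)) := contDiff_uncurry_prd hf
  have hfv : ContDiff ℝ 2 (uncurry (pvd f)) := contDiff_uncurry_pvd hf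
  have hfrr : ContDiff ℝ 1 (uncurry (prd (prd f))) := contDiff_uncurry_prd hfr
  have hfrv : ContDiff ℝ 1 (uncurry (pvd (prd f))) := contDiff_uncurry_pvd hfr
  have hinv : HasDerivAt (fun x : ℝ => 2 / x) (-(2 / r ^ 2)) r := by
    simpa [div_eq_mul_inv] using (hasDerivAt_inv hr).const_mul (2 : ℝ)
  have hsum := ((((hD.hasDerivAt.mul (hasDerivAt_prd (hfrr.differentiable one_ne_zero (v, r)))).add
    ((hasDerivAt_prd (hfrv.differentiable one_ne_zero (v, r))).const_mul 2)).add
    (hinv.mul (hasDerivAt_prd (hfv.differentiable (by simp) (v, r))))).add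
    (hR.hasDerivAt.mul (hasDerivAt_prd (hfr.differentiable (by simp) (v, r))))).add
    (hasDerivAt_prd hLf)
  rw [pvd_prd_eq_prd_pvd hfr, pvd_prd_eq_prd_pvd (hf.of_le (by norm_num))]
  exact hsum.deriv

theorem waveOp_prd_sub_prd_waveOp (hD : DifferentiableAt ℝ D r) (hR : DifferentiableAt ℝ R r)
    (hr : r ≠ 0) (hf : ContDiff ℝ 3 (uncurry f)) (hLf : DifferentiableAt ℝ (uncurry Lf) (v, r)) :
    waveOp D R Ldrf (prd f) v r - prd (waveOp D R Lf f) v r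
      = -(deriv D r) * prd (prd f) v r + (2 / r ^ 2) * pvd f v r - deriv R r * prd f v r
        + (Ldrf v r - prd Lf v r) := by
  rw [prd_waveOp hD hR hr hf hLf, waveOp]
  ring

end WaveOperator

/-- The commutator of the wave operator with ∂_r in (v,r) coordinates on extreme
Reissner–Nordström: [□_g, ∂_r]ψ = −D'∂_r²ψ + (2/r²)∂_vψ − R'∂_rψ + (2/r)Δψ,
and D'(M) = 0 so the top-order term vanishes on the horizon.  Here Lψ stands for
Δψ and Ldrψ for Δ(∂_r ψ), related by [Δ, ∂_r]ψ = (2/r)Δψ. -/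
theorem commutator_with_partial_r (M : ℝ) (hM : 0 < M) (D R : ℝ → ℝ)
    (hD : ∀ r, D r = (1 - M / r) ^ 2)
    (hR : ∀ r, R r = deriv D r + 2 * D r / r)
    (ψ Lψ Ldrψ : ℝ → ℝ → ℝ)
    (hψ : ContDiff ℝ 3 (fun p : ℝ × ℝ => ψ p.1 p.2))
    (hLψ : ContDiff ℝ 1 (fun p : ℝ × ℝ => Lψ p.1 p.2))
    (hLcomm : ∀ v r, 0 < r → Ldrψ v r = prd Lψ v r + (2 / r) * Lψ v r)
    (Box : (ℝ → ℝ → ℝ) → (ℝ → ℝ → ℝ) → (ℝ → ℝ → ℝ))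
    (hBox : ∀ Lf f v r, Box Lf f v r =
      D r * prd (prd f) v r + 2 * pvd (prd f) v r + (2 / r) * pvd f v r
        + R r * prd f v r + Lf v r) :
    (∀ v r, M ≤ r →
      Box Ldrψ (prd ψ) v r - prd (Box Lψ ψ) v r
        = -(deriv D r) * prd (prd ψ) v r + (2 / r ^ 2) * pvd ψ v r
          - deriv R r * prd ψ v r + (2 / r) * Lψ v r) ∧
    deriv D M = 0 := by
  obtain rfl : D = fun x => (1 - M / x) ^ 2 := funext hD
  obtain rfl : Box = waveOp _ R :=
    funext fun Lf => funext fun f => funext fun v => funext (hBox Lf f v)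
  refine ⟨fun v r hr => ?_, deriv_one_sub_div_sq_self hM.ne'⟩
  have hr0 : 0 < r := hM.trans_le hr
  have hDr : DifferentiableAt ℝ (fun x => (1 - M / x) ^ 2) r :=
    (hasDerivAt_one_sub_div_sq M hr0.ne').differentiableAt
  have hRr : DifferentiableAt ℝ R r := by
    rw [funext hR]
    exact (differentiableAt_deriv_one_sub_div_sq M hr0.ne').add
      ((hDr.const_mul 2).div differentiableAt_id hr0.ne')
  rw [waveOp_prd_sub_prd_waveOp hDr hRr hr0.ne' hψ (hLψ.differentiable one_ne_zero (v, r)),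
    hLcomm v r hr0]
  ring
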